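/- Let λ ∈ ℝ \ {0}, η(ξ) = |ξ|^{(2β-1)/2} with 0 < β < 1, a ∈ ℂ, f₂ ∈ L²(ℝ), and define ψ(ξ) = (a η(ξ) + f₂(ξ))/(iλ + ξ²). Then ‖ψ‖²_{L²(ℝ)} ≤ 2 (π/sin(βπ/2)) |λ|^{β-2} |a|² + (2/λ²) ‖f₂‖²_{L²(ℝ)}. -/

import Mathlib

/-!
Since `|iλ + ξ²|² = λ² + ξ⁴ ≥ λ²` and `|u + v|² ≤ 2|u|² + 2|v|²`, everything reduces to the
estimate `∫ |ξ|^(2β-1) / (λ² + ξ⁴) dξ ≤ |λ|^(β-2) (1/β + 1/(2-β)) ≤ (2/β) |λ|^(β-2)`, and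
`2/β ≤ π / sin(βπ/2)` because `sin x ≤ x`. The integral is even in `ξ`; on `(0, ∞)` split it at
`ξ = √|λ|`, drop `ξ⁴` from the denominator below that point and `λ²` above it, and integrate
the resulting powers exactly.
-/

open MeasureTheory

open Real Set

lemma integrable_comp_abs_of_integrableOn_Ioi {f : ℝ → ℝ} (hf : IntegrableOn f (Ioi 0)) :
    Integrable fun x => f |x| := by
  have hpos : IntegrableOn (fun x => f |x|) (Ioi 0) :=
    hf.congr_fun (fun x hx => by rw [abs_of_pos hx]) measurableSet_Ioi
  have hneg : IntegrableOn (fun x => f |x|) (Iic 0) := by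
    have h := (integrableOn_Ici_iff_integrableOn_Ioi).2 hf |>.comp_neg
    rw [neg_Ici, neg_zero] at h
    exact h.congr_fun (fun x hx => by rw [abs_of_nonpos hx]) measurableSet_Iic
  simpa [Iic_union_Ioi] using hneg.union hpos

lemma MeasureTheory.Lp.integral_norm_sq_eq_norm_sq {α E : Type*} [MeasurableSpace α]
    {μ : Measure α} [NormedAddCommGroup E] (f : Lp E 2 μ) :
    ∫ x, ‖f x‖ ^ 2 ∂μ = ‖f‖ ^ 2 := by
  rw [Lp.norm_def, (Lp.memLp f).eLpNorm_eq_integral_rpow_norm two_ne_zero ENNReal.ofNat_ne_top,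
    ENNReal.toReal_ofReal (by positivity), ← rpow_natCast, ← rpow_mul (by positivity)]
  simp

lemma MeasureTheory.Lp.integrable_norm_sq {α E : Type*} [MeasurableSpace α]
    {μ : Measure α} [NormedAddCommGroup E] (f : Lp E 2 μ) :
    Integrable (fun x => ‖f x‖ ^ 2) μ :=
  (memLp_two_iff_integrable_sq_norm (Lp.aestronglyMeasurable f)).1 (Lp.memLp f)

lemma measurable_rpow_div_pow_four_add (L s : ℝ) :
    Measurable fun x : ℝ => x ^ (s - 1) / (L ^ 4 + x ^ 4) := by
  fun_prop

section

variable {L s : ℝ}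

lemma rpow_div_pow_four_add_le_div (hL : 0 < L) {x : ℝ} (hx : 0 < x) :
    x ^ (s - 1) / (L ^ 4 + x ^ 4) ≤ x ^ (s - 1) / L ^ 4 := by
  gcongr
  linarith [pow_pos hx 4]

lemma rpow_div_pow_four_add_le_rpow (hL : 0 < L) {x : ℝ} (hx : 0 < x) :
    x ^ (s - 1) / (L ^ 4 + x ^ 4) ≤ x ^ (s - 5) :=
  calc x ^ (s - 1) / (L ^ 4 + x ^ 4) ≤ x ^ (s - 1) / x ^ 4 := by
        gcongr; linarith [pow_pos hL 4]
    _ = x ^ (s - 5) := by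
        rw [← rpow_ofNat, ← rpow_sub hx]; ring_nf

lemma integrableOn_Ioc_rpow_div_pow_four_add (hL : 0 < L) (hs : 0 < s) :
    IntegrableOn (fun x : ℝ => x ^ (s - 1) / (L ^ 4 + x ^ 4)) (Ioc 0 L) := by
  have hmaj : IntegrableOn (fun x : ℝ => x ^ (s - 1) / L ^ 4) (Ioc 0 L) :=
    ((intervalIntegral.intervalIntegrable_rpow' (by linarith)).1).div_const _
  refine hmaj.mono' (measurable_rpow_div_pow_four_add L s).aestronglyMeasurable ?_
  refine ae_restrict_of_forall_mem measurableSet_Ioc fun x hx => ?_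
  rw [norm_of_nonneg (by have := hx.1; positivity)]
  exact rpow_div_pow_four_add_le_div hL hx.1

lemma setIntegral_Ioc_rpow_div_pow_four_add_le (hL : 0 < L) (hs : 0 < s) :
    ∫ x in Ioc 0 L, x ^ (s - 1) / (L ^ 4 + x ^ 4) ≤ L ^ (s - 4) / s := by
  have hmaj : IntegrableOn (fun x : ℝ => x ^ (s - 1) / L ^ 4) (Ioc 0 L) :=
    ((intervalIntegral.intervalIntegrable_rpow' (by linarith)).1).div_const _
  refine (setIntegral_mono_on (integrableOn_Ioc_rpow_div_pow_four_add hL hs) hmaj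
    measurableSet_Ioc fun x hx => rpow_div_pow_four_add_le_div hL hx.1).trans_eq ?_
  rw [← intervalIntegral.integral_of_le hL.le, intervalIntegral.integral_div,
    integral_rpow (Or.inl (by linarith)), sub_add_cancel, zero_rpow hs.ne', sub_zero,
    rpow_sub hL, rpow_ofNat, div_right_comm]

lemma integrableOn_Ioi_rpow_div_pow_four_add (hL : 0 < L) (hs : s < 4) :
    IntegrableOn (fun x : ℝ => x ^ (s - 1) / (L ^ 4 + x ^ 4)) (Ioi L) := by
  refine (integrableOn_Ioi_rpow_of_lt (a := s - 5) (by linarith) hL).mono'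
    (measurable_rpow_div_pow_four_add L s).aestronglyMeasurable ?_
  refine ae_restrict_of_forall_mem measurableSet_Ioi fun x hx => ?_
  rw [norm_of_nonneg (by have := hL.trans hx; positivity)]
  exact rpow_div_pow_four_add_le_rpow hL (hL.trans hx)

lemma setIntegral_Ioi_rpow_div_pow_four_add_le (hL : 0 < L) (hs : s < 4) :
    ∫ x in Ioi L, x ^ (s - 1) / (L ^ 4 + x ^ 4) ≤ L ^ (s - 4) / (4 - s) := by
  refine (setIntegral_mono_on (integrableOn_Ioi_rpow_div_pow_four_add hL hs)
    (integrableOn_Ioi_rpow_of_lt (by linarith) hL) measurableSet_Ioi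
    fun x hx => rpow_div_pow_four_add_le_rpow hL (hL.trans hx)).trans_eq ?_
  rw [integral_Ioi_rpow_of_lt (by linarith) hL, show s - 5 + 1 = s - 4 by ring, neg_div,
    ← div_neg, neg_sub]

end

section

variable {l β : ℝ}

lemma abs_rpow_div_sq_add_pow_four_eq (ξ : ℝ) :
    |ξ| ^ (2 * β - 1) / (l ^ 2 + ξ ^ 4) = |ξ| ^ (2 * β - 1) / (√|l| ^ 4 + |ξ| ^ 4) := by
  rw [show √|l| ^ 4 = l ^ 2 by
      rw [show 4 = 2 * 2 by rfl, pow_mul, sq_sqrt (abs_nonneg l), sq_abs],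
    (by decide : Even 4).pow_abs]

lemma integrable_abs_rpow_div_sq_add_pow_four (hl : l ≠ 0) (hβ0 : 0 < β) (hβ2 : β < 2) :
    Integrable fun ξ : ℝ => |ξ| ^ (2 * β - 1) / (l ^ 2 + ξ ^ 4) := by
  have hL : 0 < √|l| := sqrt_pos.2 (abs_pos.2 hl)
  simp_rw [abs_rpow_div_sq_add_pow_four_eq]
  refine integrable_comp_abs_of_integrableOn_Ioi
    (f := fun x => x ^ (2 * β - 1) / (√|l| ^ 4 + x ^ 4)) ?_
  rw [← Ioc_union_Ioi_eq_Ioi hL.le]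
  exact (integrableOn_Ioc_rpow_div_pow_four_add hL (by linarith)).union
    (integrableOn_Ioi_rpow_div_pow_four_add hL (by linarith))

lemma integral_abs_rpow_div_sq_add_pow_four_le (hl : l ≠ 0) (hβ0 : 0 < β) (hβ2 : β < 2) :
    ∫ ξ : ℝ, |ξ| ^ (2 * β - 1) / (l ^ 2 + ξ ^ 4) ≤ |l| ^ (β - 2) * (1 / β + 1 / (2 - β)) := by
  have hL : 0 < √|l| := sqrt_pos.2 (abs_pos.2 hl)
  have hLpow : √|l| ^ (2 * β - 4) = |l| ^ (β - 2) := by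
    rw [sqrt_eq_rpow, ← rpow_mul (abs_nonneg l)]; ring_nf
  simp_rw [abs_rpow_div_sq_add_pow_four_eq]
  rw [integral_comp_abs (f := fun x => x ^ (2 * β - 1) / (√|l| ^ 4 + x ^ 4)),
    ← Ioc_union_Ioi_eq_Ioi hL.le, setIntegral_union (Ioc_disjoint_Ioi le_rfl) measurableSet_Ioi
      (integrableOn_Ioc_rpow_div_pow_four_add hL (by linarith))
      (integrableOn_Ioi_rpow_div_pow_four_add hL (by linarith))]
  calc 2 * ((∫ x in Ioc 0 √|l|, x ^ (2 * β - 1) / (√|l| ^ 4 + x ^ 4))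
        + ∫ x in Ioi √|l|, x ^ (2 * β - 1) / (√|l| ^ 4 + x ^ 4))
      ≤ 2 * (√|l| ^ (2 * β - 4) / (2 * β) + √|l| ^ (2 * β - 4) / (4 - 2 * β)) := by
        gcongr
        · exact setIntegral_Ioc_rpow_div_pow_four_add_le hL (by linarith)
        · exact setIntegral_Ioi_rpow_div_pow_four_add_le hL (by linarith)
    _ = |l| ^ (β - 2) * (1 / β + 1 / (2 - β)) := by
        have : 2 - β ≠ 0 := by linarith
        have : 4 - 2 * β ≠ 0 := by linarith
        rw [hLpow]; field_simp; ring

end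

lemma one_div_add_one_div_two_sub_le_pi_div_sin {β : ℝ} (hβ0 : 0 < β) (hβ1 : β ≤ 1) :
    1 / β + 1 / (2 - β) ≤ π / sin (β * π / 2) := by
  have hx : 0 < β * π / 2 := by positivity
  have hsin : 0 < sin (β * π / 2) := sin_pos_of_pos_of_lt_pi hx (by nlinarith [pi_pos])
  calc 1 / β + 1 / (2 - β) ≤ 1 / β + 1 / β := by gcongr; linarith
    _ = π / (β * π / 2) := by field_simp; ring
    _ ≤ π / sin (β * π / 2) := by gcongr; exact sin_le hx.le

lemma norm_I_mul_add_sq_sq (l ξ : ℝ) :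
    ‖Complex.I * l + (ξ : ℂ) ^ 2‖ ^ 2 = l ^ 2 + ξ ^ 4 := by
  rw [show Complex.I * l + (ξ : ℂ) ^ 2 = ((ξ ^ 2 : ℝ) : ℂ) + l * Complex.I by push_cast; ring,
    Complex.sq_norm, Complex.normSq_add_mul_I]
  ring

lemma norm_add_div_I_mul_add_sq_sq_le {l : ℝ} (hl : l ≠ 0) (ξ : ℝ) (u v : ℂ) :
    ‖(u + v) / (Complex.I * l + (ξ : ℂ) ^ 2)‖ ^ 2
      ≤ 2 * ‖u‖ ^ 2 / (l ^ 2 + ξ ^ 4) + 2 / l ^ 2 * ‖v‖ ^ 2 := by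
  have hsum : ‖u + v‖ ^ 2 ≤ 2 * ‖u‖ ^ 2 + 2 * ‖v‖ ^ 2 := by
    nlinarith [norm_add_le u v, add_sq_le (a := ‖u‖) (b := ‖v‖), norm_nonneg (u + v)]
  have hden : l ^ 2 ≤ l ^ 2 + ξ ^ 4 := by linarith [pow_nonneg (sq_nonneg ξ) 2, pow_mul ξ 2 2]
  calc ‖(u + v) / (Complex.I * l + (ξ : ℂ) ^ 2)‖ ^ 2
      = ‖u + v‖ ^ 2 / (l ^ 2 + ξ ^ 4) := by rw [norm_div, div_pow, norm_I_mul_add_sq_sq]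
    _ ≤ (2 * ‖u‖ ^ 2 + 2 * ‖v‖ ^ 2) / (l ^ 2 + ξ ^ 4) := by gcongr
    _ ≤ 2 * ‖u‖ ^ 2 / (l ^ 2 + ξ ^ 4) + 2 * ‖v‖ ^ 2 / l ^ 2 := by
        rw [add_div]; gcongr
    _ = 2 * ‖u‖ ^ 2 / (l ^ 2 + ξ ^ 4) + 2 / l ^ 2 * ‖v‖ ^ 2 := by ring

lemma norm_mul_abs_rpow_half_sq (a : ℂ) (t ξ : ℝ) :
    ‖a * ((|ξ| ^ (t / 2) : ℝ) : ℂ)‖ ^ 2 = ‖a‖ ^ 2 * |ξ| ^ t := by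
  rw [norm_mul, Complex.norm_real, norm_of_nonneg (by positivity), mul_pow,
    ← rpow_natCast (|ξ| ^ (t / 2)), ← rpow_mul (abs_nonneg ξ)]
  norm_num

/-- For real `l ≠ 0`, `0 < β < 1`, `a ∈ ℂ`, `f₂ ∈ L²(ℝ)` and
`ψ(ξ) = (a η(ξ) + f₂(ξ))/(i l + ξ²)` with `η(ξ) = |ξ|^((2β-1)/2)`, one has
`‖ψ‖²_{L²} ≤ 2 (π/sin(βπ/2)) |l|^(β-2) |a|² + (2/l²) ‖f₂‖²`. -/
theorem stmt5 (β l : ℝ) (hβ0 : 0 < β) (hβ1 : β < 1) (hl : l ≠ 0) (a : ℂ)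
    (f₂ : MeasureTheory.Lp ℂ 2 (volume : MeasureTheory.Measure ℝ)) :
    (∫ ξ : ℝ, ‖(a * ((|ξ| ^ ((2 * β - 1) / 2) : ℝ) : ℂ) + f₂ ξ)
        / (Complex.I * l + (ξ : ℂ) ^ 2)‖ ^ 2)
      ≤ 2 * (Real.pi / Real.sin (β * Real.pi / 2)) * |l| ^ (β - 2) * ‖a‖ ^ 2
        + (2 / l ^ 2) * ‖f₂‖ ^ 2 := by
  have hη := integrable_abs_rpow_div_sq_add_pow_four hl hβ0 (by linarith)
  have hpointwise (ξ : ℝ) := norm_add_div_I_mul_add_sq_sq_le hl ξ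
    (a * ((|ξ| ^ ((2 * β - 1) / 2) : ℝ) : ℂ)) (f₂ ξ)
  simp_rw [norm_mul_abs_rpow_half_sq, mul_div_assoc] at hpointwise
  calc _ ≤ ∫ ξ : ℝ, 2 * (‖a‖ ^ 2 * (|ξ| ^ (2 * β - 1) / (l ^ 2 + ξ ^ 4)))
          + 2 / l ^ 2 * ‖f₂ ξ‖ ^ 2 :=
        integral_mono_of_nonneg (.of_forall fun ξ => by positivity)
          ((hη.const_mul _).const_mul _ |>.add ((Lp.integrable_norm_sq f₂).const_mul _))
          (.of_forall hpointwise)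
    _ = 2 * (‖a‖ ^ 2 * ∫ ξ : ℝ, |ξ| ^ (2 * β - 1) / (l ^ 2 + ξ ^ 4))
          + 2 / l ^ 2 * ‖f₂‖ ^ 2 := by
        rw [integral_add ((hη.const_mul _).const_mul _) ((Lp.integrable_norm_sq f₂).const_mul _),
          integral_const_mul, integral_const_mul, integral_const_mul,
          Lp.integral_norm_sq_eq_norm_sq]
    _ ≤ 2 * (‖a‖ ^ 2 * (|l| ^ (β - 2) * (π / sin (β * π / 2)))) + 2 / l ^ 2 * ‖f₂‖ ^ 2 := by
        gcongr
        exact (integral_abs_rpow_div_sq_add_pow_four_le hl hβ0 (by linarith)).trans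
          (by gcongr; exact one_div_add_one_div_two_sub_le_pi_div_sin hβ0 hβ1.le)
    _ = _ := by ring
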